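/- If |α − α'| ≤ ε, |θ − θ'| ≤ ε, and |φ − φ'| ≤ ε, then the operator norm of R_α ∘ M_{θ,φ} − R_{α'} ∘ M_{θ',φ'} is at most √5 · ε, where R_α denotes counterclockwise rotation by angle α in ℝ². -/

import Mathlib

open Real Matrix

noncomputable def M (θ φ : ℝ) : Matrix (Fin 2) (Fin 3) ℝ :=
  !![-sin θ, cos θ, 0; -cos θ * cos φ, -sin θ * cos φ, sin φ]

/-- Counterclockwise rotation by `α` in the plane, as a matrix. -/
noncomputable def Rot (α : ℝ) : Matrix (Fin 2) (Fin 2) ℝ :=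
  !![cos α, -sin α; sin α, cos α]

/-- `R_α ∘ M_{θ,φ}` as a continuous linear map between Euclidean spaces. -/
noncomputable def TR (α θ φ : ℝ) : EuclideanSpace ℝ (Fin 3) →L[ℝ] EuclideanSpace ℝ (Fin 2) :=
  (Matrix.toEuclideanLin (Rot α * M θ φ)).toContinuousLinearMap

/-! Auxiliary material -/

lemma psd2 {A B d t0 t1 : ℝ} (hA : 0 ≤ A) (hB : 0 ≤ B) (hd : d^2 ≤ A*B) :
    2*d*t0*t1 ≤ A*t0^2 + B*t1^2 := by
  rcases eq_or_lt_of_le hA with h | h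
  · have hd0 : d = 0 := by nlinarith [sq_nonneg d]
    subst hd0; rw [← h]; nlinarith [mul_nonneg hB (sq_nonneg t1)]
  · have key : A*(A*t0^2 + B*t1^2 - 2*d*t0*t1) ≥ 0 := by
      nlinarith [sq_nonneg (A*t0 - d*t1), mul_nonneg (sub_nonneg.2 hd) (sq_nonneg t1)]
    nlinarith [key]

lemma keylem {a b d K2 t0 t1 n : ℝ} (hn : 0 ≤ n) (hK : 0 ≤ K2) (haK : 0 ≤ K2 - a)
    (hbK : 0 ≤ K2 - b)
    (hdet : d^2 ≤ (K2-a)*(K2-b)) (h1 : (t0^2+t1^2)^2 ≤ (a*t0^2+2*d*t0*t1+b*t1^2)*n) :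
    t0^2 + t1^2 ≤ K2*n := by
  have hpsd := psd2 haK hbK hdet (t0 := t0) (t1 := t1)
  have h2 : a*t0^2 + 2*d*t0*t1 + b*t1^2 ≤ K2*(t0^2+t1^2) := by nlinarith [hpsd]
  rcases eq_or_lt_of_le (by positivity : (0:ℝ) ≤ t0^2 + t1^2) with h | h
  · rw [← h]; exact mul_nonneg hK hn
  · have h3 : (t0^2+t1^2)^2 ≤ K2*(t0^2+t1^2)*n := le_trans h1 (by nlinarith [h2, hn])
    nlinarith [h3, h]

set_option maxHeartbeats 800000 in
lemma lemA (ε u w v c s X Y Z : ℝ) (hcs : c^2 + s^2 = 1)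
    (hu : |u| ≤ ε) (hw : |w| ≤ ε) (hv : |v| ≤ ε) :
    ((w*c - u)*X - w*s*Z)^2 + (v*s*X - (u*c - w)*Y + v*c*Z)^2 ≤ 5*ε^2*(X^2+Y^2+Z^2) := by
  have hc2 : c^2 ≤ 1 := by nlinarith [sq_nonneg s]
  have huc : u^2*c^2 ≤ u^2*1 := mul_le_mul_of_nonneg_left hc2 (sq_nonneg u)
  have hm : 0 ≤ |u*w| + u*w*c := by
    have h1 : |u*w*c| ≤ |u*w| := by
      rw [abs_mul]
      exact mul_le_of_le_one_right (abs_nonneg _) (abs_le_one_iff_mul_self_le_one.2 (by nlinarith))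
    nlinarith [neg_abs_le (u*w*c), h1]
  have habs : |u*w| = |u| * |w| := abs_mul u w
  set t0 := (w*c - u)*X - w*s*Z with ht0
  set t1 := v*s*X - (u*c - w)*Y + v*c*Z with ht1
  set K2 := (|u|+|w|)^2 + v^2 with hK2
  have hn0 : (0:ℝ) ≤ X^2+Y^2+Z^2 := by positivity
  have e1 : K2 - (u^2 + w^2 - 2*u*w*c) = v^2 + 2*(|u*w| + u*w*c) := by
    rw [hK2, habs]; linear_combination sq_abs u + sq_abs w
  have e2 : K2 - ((u*c - w)^2 + v^2) = u^2*s^2 + 2*(|u*w| + u*w*c) := by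
    rw [hK2, habs]; linear_combination sq_abs u + sq_abs w - u^2 * hcs
  have haK : 0 ≤ K2 - (u^2 + w^2 - 2*u*w*c) := by rw [e1]; positivity
  have hbK : 0 ≤ K2 - ((u*c - w)^2 + v^2) := by rw [e2]; positivity
  have hdet : (-(u*v*s))^2 ≤ (K2 - (u^2 + w^2 - 2*u*w*c))*(K2 - ((u*c - w)^2 + v^2)) := by
    rw [e1, e2]
    linarith [mul_nonneg hm (sq_nonneg v), mul_nonneg hm (sq_nonneg (u*s)),
      sq_nonneg (|u*w| + u*w*c)]
  have lag : ∀ p1 p2 p3 : ℝ, (p1*X + p2*Y + p3*Z)^2 ≤ (p1^2+p2^2+p3^2)*(X^2+Y^2+Z^2) := by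
    intro p1 p2 p3
    linarith [sq_nonneg (p1*Y - p2*X), sq_nonneg (p1*Z - p3*X), sq_nonneg (p2*Z - p3*Y)]
  have h1 : (t0^2 + t1^2)^2 ≤ ((u^2 + w^2 - 2*u*w*c)*t0^2 + 2*(-(u*v*s))*t0*t1
      + ((u*c - w)^2 + v^2)*t1^2)*(X^2+Y^2+Z^2) := by
    have h := lag (t0*(w*c-u) + t1*(v*s)) (-(t1*(u*c-w))) (-(t0*(w*s)) + t1*(v*c))
    have e3 : (t0*(w*c-u) + t1*(v*s))*X + (-(t1*(u*c-w)))*Y + (-(t0*(w*s)) + t1*(v*c))*Z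
        = t0^2 + t1^2 := by linear_combination (-t0) * ht0 + (-t1) * ht1
    have e4 : (t0*(w*c-u) + t1*(v*s))^2 + (-(t1*(u*c-w)))^2 + (-(t0*(w*s)) + t1*(v*c))^2
        = (u^2 + w^2 - 2*u*w*c)*t0^2 + 2*(-(u*v*s))*t0*t1 + ((u*c - w)^2 + v^2)*t1^2 := by
      linear_combination (t0^2*w^2 + t1^2*v^2) * hcs
    rw [e3, e4] at h
    exact h
  have hq : t0^2 + t1^2 ≤ K2*(X^2+Y^2+Z^2) :=
    keylem hn0 (by positivity) haK hbK hdet h1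
  have hK5 : K2 ≤ 5*ε^2 := by
    rw [hK2]
    have h1 : (|u|+|w|)^2 ≤ (2*ε)^2 := pow_le_pow_left₀ (by positivity) (by linarith) 2
    have h3 : |v|^2 ≤ ε^2 := pow_le_pow_left₀ (abs_nonneg v) hv 2
    rw [sq_abs] at h3
    linarith [h1, h3]
  calc t0^2 + t1^2 ≤ K2*(X^2+Y^2+Z^2) := hq
    _ ≤ 5*ε^2*(X^2+Y^2+Z^2) := mul_le_mul_of_nonneg_right hK5 hn0

noncomputable def L2 : Matrix (Fin 2) (Fin 3) ℝ →ₗ[ℝ]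
    (EuclideanSpace ℝ (Fin 3) →L[ℝ] EuclideanSpace ℝ (Fin 2)) :=
  (LinearMap.toContinuousLinearMap.toLinearMap).comp Matrix.toEuclideanLin.toLinearMap

lemma TR_eq (α θ φ : ℝ) : TR α θ φ = L2 (Rot α * M θ φ) := rfl

lemma prod_eq (a b f : ℝ) : Rot a * M b f =
    !![-(cos a * sin b) + sin a * (cos b * cos f), cos a * cos b + sin a * (sin b * cos f),
       -(sin a * sin f);
       -(sin a * sin b) - cos a * (cos b * cos f), sin a * cos b - cos a * (sin b * cos f),
       cos a * sin f] := by
  ext i j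
  fin_cases i <;> fin_cases j <;>
    simp [Rot, M, Matrix.mul_apply, Fin.sum_univ_two] <;> ring

noncomputable def E (i : Fin 2) (j : Fin 3) := L2 (Matrix.single i j 1)

lemma L2_eq (a b c d e f : ℝ) : L2 !![a,b,c;d,e,f] =
    a • E 0 0 + b • E 0 1 + c • E 0 2 + d • E 1 0 + e • E 1 1 + f • E 1 2 := by
  have : !![a,b,c;d,e,f] = a • Matrix.single (0:Fin 2) (0:Fin 3) 1
      + b • Matrix.single 0 1 1 + c • Matrix.single 0 2 1
      + d • Matrix.single 1 0 1 + e • Matrix.single 1 1 1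
      + f • Matrix.single 1 2 1 := by
    ext i j
    fin_cases i <;> fin_cases j <;> simp [Matrix.single]
  rw [this]
  simp only [map_add, _root_.map_smul, E]

lemma L2_hasDerivAt {g00 g01 g02 g10 g11 g12 : ℝ → ℝ} {s00 s01 s02 s10 s11 s12 : ℝ} {t : ℝ}
    (h00 : HasDerivAt g00 s00 t) (h01 : HasDerivAt g01 s01 t) (h02 : HasDerivAt g02 s02 t)
    (h10 : HasDerivAt g10 s10 t) (h11 : HasDerivAt g11 s11 t) (h12 : HasDerivAt g12 s12 t) :
    HasDerivAt (fun t => L2 !![g00 t, g01 t, g02 t; g10 t, g11 t, g12 t])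
      (L2 !![s00, s01, s02; s10, s11, s12]) t := by
  simp only [L2_eq]
  exact (((((h00.smul_const _).add (h01.smul_const _)).add (h02.smul_const _)).add
    (h10.smul_const _)).add (h11.smul_const _)).add (h12.smul_const (E 1 2))

lemma L2_apply_norm (A : Matrix (Fin 2) (Fin 3) ℝ) (x : EuclideanSpace ℝ (Fin 3)) :
    ‖L2 A x‖ = Real.sqrt ((A 0 0 * x 0 + A 0 1 * x 1 + A 0 2 * x 2)^2
      + (A 1 0 * x 0 + A 1 1 * x 1 + A 1 2 * x 2)^2) := by
  rw [EuclideanSpace.norm_eq]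
  congr 1
  rw [Fin.sum_univ_two]
  simp [L2, Matrix.toEuclideanLin_apply, Matrix.mulVec, dotProduct,
    Fin.sum_univ_three, sq_abs]

lemma x_norm (x : EuclideanSpace ℝ (Fin 3)) :
    ‖x‖ = Real.sqrt ((x 0)^2 + (x 1)^2 + (x 2)^2) := by
  rw [EuclideanSpace.norm_eq]
  congr 1
  rw [Fin.sum_univ_three]
  simp [sq_abs]

set_option maxHeartbeats 1000000 in
lemma norm_L2_S_le (ε a b f w u v : ℝ) (hε : 0 ≤ ε)
    (hw : |w| ≤ ε) (hu : |u| ≤ ε) (hv : |v| ≤ ε) :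
    ‖L2 !![cos a * ((w*cos f - u)*cos b) - sin a * ((u*cos f - w)*sin b + v*sin f*cos b),
         cos a * ((w*cos f - u)*sin b) - sin a * (-(u*cos f - w)*cos b + v*sin f*sin b),
         cos a * (-(w*sin f)) - sin a * (v*cos f);
         sin a * ((w*cos f - u)*cos b) + cos a * ((u*cos f - w)*sin b + v*sin f*cos b),
         sin a * ((w*cos f - u)*sin b) + cos a * (-(u*cos f - w)*cos b + v*sin f*sin b),
         sin a * (-(w*sin f)) + cos a * (v*cos f)]‖ ≤ Real.sqrt 5 * ε := by
  apply ContinuousLinearMap.opNorm_le_bound _ (by positivity)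
  intro x
  rw [L2_apply_norm, x_norm]
  simp only [Matrix.cons_val', Matrix.cons_val_zero, Matrix.cons_val_one, Matrix.head_cons,
    Matrix.empty_val', Matrix.cons_val_fin_one, Matrix.head_fin_const, Matrix.cons_val_two,
    Matrix.tail_cons]
  set x0 := x 0
  set x1 := x 1
  set x2 := x 2
  have key : ((cos a * ((w*cos f - u)*cos b) - sin a * ((u*cos f - w)*sin b + v*sin f*cos b)) * x0
      + (cos a * ((w*cos f - u)*sin b) - sin a * (-(u*cos f - w)*cos b + v*sin f*sin b)) * x1
      + (cos a * (-(w*sin f)) - sin a * (v*cos f)) * x2)^2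
      + ((sin a * ((w*cos f - u)*cos b) + cos a * ((u*cos f - w)*sin b + v*sin f*cos b)) * x0
      + (sin a * ((w*cos f - u)*sin b) + cos a * (-(u*cos f - w)*cos b + v*sin f*sin b)) * x1
      + (sin a * (-(w*sin f)) + cos a * (v*cos f)) * x2)^2
      ≤ 5*ε^2*(x0^2 + x1^2 + x2^2) := by
    have hA := lemA ε u w v (cos f) (sin f) (cos b * x0 + sin b * x1) (-(sin b) * x0 + cos b * x1)
      x2 (by rw [← Real.cos_sq_add_sin_sq f]) hu hw hv
    calc _ = ((w*cos f - u)*(cos b * x0 + sin b * x1) - w*sin f*x2)^2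
          + (v*sin f*(cos b * x0 + sin b * x1) - (u*cos f - w)*(-(sin b) * x0 + cos b * x1)
            + v*cos f*x2)^2 := by
          linear_combination (((w*cos f - u)*(cos b * x0 + sin b * x1) - w*sin f*x2)^2
            + (v*sin f*(cos b * x0 + sin b * x1) - (u*cos f - w)*(-(sin b) * x0 + cos b * x1)
            + v*cos f*x2)^2) * (Real.sin_sq_add_cos_sq a)
      _ ≤ 5*ε^2*((cos b * x0 + sin b * x1)^2 + (-(sin b) * x0 + cos b * x1)^2 + x2^2) := hA
      _ = 5*ε^2*(x0^2 + x1^2 + x2^2) := by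
          linear_combination (5*ε^2*(x0^2+x1^2)) * (Real.sin_sq_add_cos_sq b)
  calc Real.sqrt _ ≤ Real.sqrt (5*ε^2*(x0^2 + x1^2 + x2^2)) := Real.sqrt_le_sqrt key
    _ = Real.sqrt 5 * ε * Real.sqrt (x0^2 + x1^2 + x2^2) := by
        rw [Real.sqrt_mul (by positivity), Real.sqrt_mul (by norm_num), Real.sqrt_sq hε]

theorem stmt7 (ε α α' θ θ' φ φ' : ℝ) (hε : 0 < ε)
    (hα : |α - α'| ≤ ε) (hθ : |θ - θ'| ≤ ε) (hφ : |φ - φ'| ≤ ε) :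
    ‖TR α θ φ - TR α' θ' φ'‖ ≤ Real.sqrt 5 * ε := by
  set w := α' - α with hwdef
  set u := θ' - θ with hudef
  set v := φ' - φ with hvdef
  have hw : |w| ≤ ε := by rw [hwdef, abs_sub_comm]; exact hα
  have hu : |u| ≤ ε := by rw [hudef, abs_sub_comm]; exact hθ
  have hv : |v| ≤ ε := by rw [hvdef, abs_sub_comm]; exact hφ
  -- the path and its derivative
  set G : ℝ → (EuclideanSpace ℝ (Fin 3) →L[ℝ] EuclideanSpace ℝ (Fin 2)) := fun t =>
    L2 !![cos (α+t*w) * ((w*cos (φ+t*v) - u)*cos (θ+t*u))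
            - sin (α+t*w) * ((u*cos (φ+t*v) - w)*sin (θ+t*u) + v*sin (φ+t*v)*cos (θ+t*u)),
          cos (α+t*w) * ((w*cos (φ+t*v) - u)*sin (θ+t*u))
            - sin (α+t*w) * (-(u*cos (φ+t*v) - w)*cos (θ+t*u) + v*sin (φ+t*v)*sin (θ+t*u)),
          cos (α+t*w) * (-(w*sin (φ+t*v))) - sin (α+t*w) * (v*cos (φ+t*v));
          sin (α+t*w) * ((w*cos (φ+t*v) - u)*cos (θ+t*u))
            + cos (α+t*w) * ((u*cos (φ+t*v) - w)*sin (θ+t*u) + v*sin (φ+t*v)*cos (θ+t*u)),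
          sin (α+t*w) * ((w*cos (φ+t*v) - u)*sin (θ+t*u))
            + cos (α+t*w) * (-(u*cos (φ+t*v) - w)*cos (θ+t*u) + v*sin (φ+t*v)*sin (θ+t*u)),
          sin (α+t*w) * (-(w*sin (φ+t*v))) + cos (α+t*w) * (v*cos (φ+t*v))]
  have hf : ∀ t : ℝ, HasDerivAt (fun t => L2 (Rot (α+t*w) * M (θ+t*u) (φ+t*v))) (G t) t := by
    intro t
    have hA : HasDerivAt (fun t : ℝ => α+t*w) w t := by
      simpa using ((hasDerivAt_id t).mul_const w).const_add α
    have hB : HasDerivAt (fun t : ℝ => θ+t*u) u t := by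
      simpa using ((hasDerivAt_id t).mul_const u).const_add θ
    have hF : HasDerivAt (fun t : ℝ => φ+t*v) v t := by
      simpa using ((hasDerivAt_id t).mul_const v).const_add φ
    have hca : HasDerivAt (fun t : ℝ => cos (α+t*w)) (-sin (α+t*w) * w) t :=
      (Real.hasDerivAt_cos _).comp t hA
    have hsa : HasDerivAt (fun t : ℝ => sin (α+t*w)) (cos (α+t*w) * w) t :=
      (Real.hasDerivAt_sin _).comp t hA
    have hcb : HasDerivAt (fun t : ℝ => cos (θ+t*u)) (-sin (θ+t*u) * u) t :=
      (Real.hasDerivAt_cos _).comp t hB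
    have hsb : HasDerivAt (fun t : ℝ => sin (θ+t*u)) (cos (θ+t*u) * u) t :=
      (Real.hasDerivAt_sin _).comp t hB
    have hcf : HasDerivAt (fun t : ℝ => cos (φ+t*v)) (-sin (φ+t*v) * v) t :=
      (Real.hasDerivAt_cos _).comp t hF
    have hsf : HasDerivAt (fun t : ℝ => sin (φ+t*v)) (cos (φ+t*v) * v) t :=
      (Real.hasDerivAt_sin _).comp t hF
    have h00 : HasDerivAt (fun t : ℝ => -(cos (α+t*w) * sin (θ+t*u))
        + sin (α+t*w) * (cos (θ+t*u) * cos (φ+t*v)))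
        (cos (α+t*w) * ((w*cos (φ+t*v) - u)*cos (θ+t*u))
          - sin (α+t*w) * ((u*cos (φ+t*v) - w)*sin (θ+t*u) + v*sin (φ+t*v)*cos (θ+t*u))) t := by
      have := ((hca.mul hsb).neg).add (hsa.mul (hcb.mul hcf))
      exact this.congr_deriv (by simp only [Pi.mul_apply]; ring)
    have h01 : HasDerivAt (fun t : ℝ => cos (α+t*w) * cos (θ+t*u)
        + sin (α+t*w) * (sin (θ+t*u) * cos (φ+t*v)))
        (cos (α+t*w) * ((w*cos (φ+t*v) - u)*sin (θ+t*u))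
          - sin (α+t*w) * (-(u*cos (φ+t*v) - w)*cos (θ+t*u) + v*sin (φ+t*v)*sin (θ+t*u))) t := by
      have := (hca.mul hcb).add (hsa.mul (hsb.mul hcf))
      exact this.congr_deriv (by simp only [Pi.mul_apply]; ring)
    have h02 : HasDerivAt (fun t : ℝ => -(sin (α+t*w) * sin (φ+t*v)))
        (cos (α+t*w) * (-(w*sin (φ+t*v))) - sin (α+t*w) * (v*cos (φ+t*v))) t := by
      have := (hsa.mul hsf).neg
      exact this.congr_deriv (by ring)
    have h10 : HasDerivAt (fun t : ℝ => -(sin (α+t*w) * sin (θ+t*u))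
        - cos (α+t*w) * (cos (θ+t*u) * cos (φ+t*v)))
        (sin (α+t*w) * ((w*cos (φ+t*v) - u)*cos (θ+t*u))
          + cos (α+t*w) * ((u*cos (φ+t*v) - w)*sin (θ+t*u) + v*sin (φ+t*v)*cos (θ+t*u))) t := by
      have := ((hsa.mul hsb).neg).sub (hca.mul (hcb.mul hcf))
      exact this.congr_deriv (by simp only [Pi.mul_apply]; ring)
    have h11 : HasDerivAt (fun t : ℝ => sin (α+t*w) * cos (θ+t*u)
        - cos (α+t*w) * (sin (θ+t*u) * cos (φ+t*v)))
        (sin (α+t*w) * ((w*cos (φ+t*v) - u)*sin (θ+t*u))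
          + cos (α+t*w) * (-(u*cos (φ+t*v) - w)*cos (θ+t*u) + v*sin (φ+t*v)*sin (θ+t*u))) t := by
      have := (hsa.mul hcb).sub (hca.mul (hsb.mul hcf))
      exact this.congr_deriv (by simp only [Pi.mul_apply]; ring)
    have h12 : HasDerivAt (fun t : ℝ => cos (α+t*w) * sin (φ+t*v))
        (sin (α+t*w) * (-(w*sin (φ+t*v))) + cos (α+t*w) * (v*cos (φ+t*v))) t := by
      have := hca.mul hsf
      exact this.congr_deriv (by ring)
    simp only [prod_eq]
    exact L2_hasDerivAt h00 h01 h02 h10 h11 h12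
  have bound : ∀ t ∈ Set.univ, ‖G t‖ ≤ Real.sqrt 5 * ε := by
    intro t _
    exact norm_L2_S_le ε (α+t*w) (θ+t*u) (φ+t*v) w u v hε.le hw hu hv
  have mvt := Convex.norm_image_sub_le_of_norm_hasDerivWithin_le
    (f := fun t => L2 (Rot (α+t*w) * M (θ+t*u) (φ+t*v))) (f' := G)
    (fun t _ => (hf t).hasDerivWithinAt) bound convex_univ (Set.mem_univ (0:ℝ))
    (Set.mem_univ (1:ℝ))
  have e0 : α + (0:ℝ)*w = α := by ring
  have e1 : θ + (0:ℝ)*u = θ := by ring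
  have e2 : φ + (0:ℝ)*v = φ := by ring
  have e0' : α + (1:ℝ)*w = α' := by rw [hwdef]; ring
  have e1' : θ + (1:ℝ)*u = θ' := by rw [hudef]; ring
  have e2' : φ + (1:ℝ)*v = φ' := by rw [hvdef]; ring
  beta_reduce at mvt
  rw [e0, e1, e2, e0', e1', e2'] at mvt
  rw [TR_eq, TR_eq]
  calc ‖L2 (Rot α * M θ φ) - L2 (Rot α' * M θ' φ')‖
      = ‖L2 (Rot α' * M θ' φ') - L2 (Rot α * M θ φ)‖ := (norm_sub_rev _ _)
    _ ≤ Real.sqrt 5 * ε * ‖(1:ℝ) - 0‖ := mvt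
    _ = Real.sqrt 5 * ε := by simp
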